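/- arXiv:math/0510667 — 6 statements merged into one kernel-verified Lean document; each statement's English description precedes it below -/
import Mathlib

section
/- Let d ≥ 1 and let f : ℝ → ℝ^d be a continuously differentiable map which is injective and satisfies f′(t) ≠ 0 for every t ∈ ℝ. Then for every t ∈ ℝ and every a > 0 one has f(t+a) ≠ f(t−a), and the map H : [0,∞) × ℝ → ℝ^d defined by H(a,t) = (f(t+a) − f(t−a))/‖f(t+a) − f(t−a)‖ for a > 0, and H(0,t) = f′(t)/‖f′(t)‖, is continuous on [0,∞) × ℝ and takes values in the unit sphere of ℝ^d. -/
/-!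
Write `D(a, t) = ∫_{-1}^{1} f'(t + a s) ds`. Since `f'` is continuous, `D` is jointly continuous
by continuity of parametric integrals, and substituting `u = t + a s` gives
`D(a, t) = a⁻¹ (f(t+a) - f(t-a))` for `a ≠ 0`, while `D(0, t) = 2 f'(t)`. Hence `H` is the
normalization of `D` on `[0, ∞) × ℝ`, and `D` does not vanish there: at `a = 0` because `f'` never
vanishes, at `a > 0` because `f` is injective. Normalization is continuous away from `0`.
-/

open Set intervalIntegral

variable {E : Type*} [NormedAddCommGroup E] [NormedSpace ℝ E]

theorem continuousAt_normalize {x : E} (hx : x ≠ 0) : ContinuousAt NormedSpace.normalize x :=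
  (continuousAt_id.norm.inv₀ (norm_ne_zero_iff.2 hx)).smul continuousAt_id

section SymmetricSlope

noncomputable def symmetricSlope (f : ℝ → E) (p : ℝ × ℝ) : E :=
  ∫ s in (-1 : ℝ)..1, deriv f (p.2 + p.1 * s)

variable {f : ℝ → E}

theorem continuous_symmetricSlope (hf : ContDiff ℝ 1 f) : Continuous (symmetricSlope f) := by
  have hf' : Continuous (deriv f) := hf.continuous_deriv le_rfl
  exact continuous_parametric_intervalIntegral_of_continuous' (by fun_prop) _ _

variable [CompleteSpace E]

theorem symmetricSlope_zero (t : ℝ) : symmetricSlope f (0, t) = (2 : ℝ) • deriv f t := by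
  norm_num [symmetricSlope]

theorem symmetricSlope_of_ne_zero (hf : ContDiff ℝ 1 f) {a : ℝ} (ha : a ≠ 0) (t : ℝ) :
    symmetricSlope f (a, t) = a⁻¹ • (f (t + a) - f (t - a)) := by
  have hdiff : Differentiable ℝ f := hf.differentiable one_ne_zero
  rw [symmetricSlope, integral_comp_add_mul _ ha, mul_one, mul_neg_one, ← sub_eq_add_neg,
    integral_deriv_eq_sub (fun x _ => hdiff x)
      ((hf.continuous_deriv le_rfl).intervalIntegrable _ _)]

end SymmetricSlope

theorem sinha_contracting_homotopy_general (d : ℕ)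
    (f : ℝ → EuclideanSpace ℝ (Fin d))
    (hf : ContDiff ℝ 1 f) (hinj : Function.Injective f)
    (hf' : ∀ t : ℝ, deriv f t ≠ 0) :
    (∀ (t a : ℝ), 0 < a → f (t + a) ≠ f (t - a)) ∧
    ContinuousOn
      (fun p : ℝ × ℝ =>
        if p.1 = 0 then ‖deriv f p.2‖⁻¹ • deriv f p.2
        else ‖f (p.2 + p.1) - f (p.2 - p.1)‖⁻¹ • (f (p.2 + p.1) - f (p.2 - p.1)))
      (Set.Ici 0 ×ˢ Set.univ) ∧
    (∀ p : ℝ × ℝ, p ∈ (Set.Ici (0:ℝ)) ×ˢ (Set.univ : Set ℝ) →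
      (if p.1 = 0 then ‖deriv f p.2‖⁻¹ • deriv f p.2
       else ‖f (p.2 + p.1) - f (p.2 - p.1)‖⁻¹ • (f (p.2 + p.1) - f (p.2 - p.1)))
        ∈ Metric.sphere (0 : EuclideanSpace ℝ (Fin d)) 1) := by
  have hsep : ∀ t a : ℝ, 0 < a → f (t + a) ≠ f (t - a) := fun t a ha h => by
    linarith [hinj h]
  have hH : ∀ p ∈ Ici (0 : ℝ) ×ˢ (univ : Set ℝ), symmetricSlope f p ≠ 0 ∧
      (if p.1 = 0 then ‖deriv f p.2‖⁻¹ • deriv f p.2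
       else ‖f (p.2 + p.1) - f (p.2 - p.1)‖⁻¹ • (f (p.2 + p.1) - f (p.2 - p.1)))
        = NormedSpace.normalize (symmetricSlope f p) := by
    rintro ⟨a, t⟩ ⟨ha : 0 ≤ a, -⟩
    rcases ha.eq_or_lt with rfl | ha
    · rw [symmetricSlope_zero, NormedSpace.normalize_smul_of_pos two_pos]
      exact ⟨smul_ne_zero two_ne_zero (hf' t), if_pos rfl⟩
    · rw [symmetricSlope_of_ne_zero hf ha.ne', NormedSpace.normalize_smul_of_pos (inv_pos.2 ha)]
      exact ⟨smul_ne_zero (inv_ne_zero ha.ne') (sub_ne_zero.2 (hsep t a ha)), if_neg ha.ne'⟩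
  refine ⟨hsep, ?_, fun p hp => ?_⟩
  · refine ContinuousOn.congr (fun p hp => ?_) (fun p hp => (hH p hp).2)
    exact ((continuousAt_normalize (hH p hp).1).comp
      (continuous_symmetricSlope hf).continuousAt).continuousWithinAt
  · rw [(hH p hp).2, mem_sphere_zero_iff_norm]
    exact NormedSpace.norm_normalize (hH p hp).1

/-- Let `d ≥ 1` and let `f : ℝ → ℝ^d` be a continuously differentiable
map which is injective and whose derivative never vanishes.  Then for every `t` and every
`a > 0` one has `f (t+a) ≠ f (t-a)`, and the map `H : [0,∞) × ℝ → ℝ^d` given by the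
normalized symmetric difference quotients for `a > 0` and by the normalized derivative for
`a = 0` is continuous on `[0,∞) × ℝ` and takes values in the unit sphere.
(Key analytic step in D. Sinha's proof of Theorem 2.1 of the paper.) -/
theorem sinha_contracting_homotopy (d : ℕ) (hd : 1 ≤ d)
    (f : ℝ → EuclideanSpace ℝ (Fin d))
    (hf : ContDiff ℝ 1 f) (hinj : Function.Injective f)
    (hf' : ∀ t : ℝ, deriv f t ≠ 0) :
    (∀ (t a : ℝ), 0 < a → f (t + a) ≠ f (t - a)) ∧
    ContinuousOn
      (fun p : ℝ × ℝ =>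
        if p.1 = 0 then ‖deriv f p.2‖⁻¹ • deriv f p.2
        else ‖f (p.2 + p.1) - f (p.2 - p.1)‖⁻¹ • (f (p.2 + p.1) - f (p.2 - p.1)))
      (Set.Ici 0 ×ˢ Set.univ) ∧
    (∀ p : ℝ × ℝ, p ∈ (Set.Ici (0:ℝ)) ×ˢ (Set.univ : Set ℝ) →
      (if p.1 = 0 then ‖deriv f p.2‖⁻¹ • deriv f p.2
       else ‖f (p.2 + p.1) - f (p.2 - p.1)‖⁻¹ • (f (p.2 + p.1) - f (p.2 - p.1)))
        ∈ Metric.sphere (0 : EuclideanSpace ℝ (Fin d)) 1) :=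
  sinha_contracting_homotopy_general d f hf hinj hf'
end

section
/- Let d ≥ 1, let e ∈ ℝ^d be a unit vector, let R > 0, and let f : ℝ → ℝ^d be a continuous injective map with f(t) = t·e for all t with |t| ≥ R. For a > 0 set G(a,t) = (f(t+a) − f(t−a))/‖f(t+a) − f(t−a)‖ (well defined since f is injective). Then G(a,·) converges uniformly on ℝ to the constant map with value e as a → +∞. -/
/-- Let `d ≥ 1`, let `e` be a unit vector of `ℝ^d`, `R > 0`, and let
`f : ℝ → ℝ^d` be continuous, injective, with `f t = t • e` whenever `|t| ≥ R`.  Then the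
normalized symmetric difference quotients `G a t = (f (t+a) - f (t-a))/‖f (t+a) - f (t-a)‖`
converge uniformly in `t` to the constant map `e` as `a → +∞`. -/
theorem normalized_difference_quotient_tendstoUniformly (d : ℕ) (hd : 1 ≤ d)
    (e : EuclideanSpace ℝ (Fin d)) (he : ‖e‖ = 1) (R : ℝ) (hR : 0 < R)
    (f : ℝ → EuclideanSpace ℝ (Fin d)) (hcont : Continuous f)
    (hinj : Function.Injective f) (hlin : ∀ t : ℝ, R ≤ |t| → f t = t • e) :
    TendstoUniformly
      (fun (a : ℝ) (t : ℝ) => ‖f (t + a) - f (t - a)‖⁻¹ • (f (t + a) - f (t - a)))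
      (fun _ : ℝ => e) Filter.atTop := by
  set g : ℝ → EuclideanSpace ℝ (Fin d) := fun t => f t - t • e with hg
  have hgcont : Continuous g := hcont.sub (continuous_id.smul continuous_const)
  have hgzero : ∀ t : ℝ, R ≤ |t| → g t = 0 := by
    intro t ht; simp [hg, hlin t ht]
  have hsupp : HasCompactSupport g := by
    apply HasCompactSupport.intro (isCompact_Icc (a := -R) (b := R))
    intro t ht
    simp only [Set.mem_Icc, not_and_or, not_le] at ht
    apply hgzero
    rcases ht with h | h
    · rw [abs_of_neg (by linarith)]; linarith
    · rw [abs_of_pos (by linarith)]; linarith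
  obtain ⟨C, hC⟩ := hsupp.exists_bound_of_continuous hgcont
  have hC0 : 0 ≤ C := le_trans (norm_nonneg _) (hC 0)
  rw [Metric.tendstoUniformly_iff]
  intro ε hε
  have hden : 0 < (4 * C + 1) / ε := by positivity
  filter_upwards [Filter.eventually_ge_atTop (C + (4 * C + 1) / (2 * ε))] with a ha
  intro t
  have hdouble : 2 * ((4 * C + 1) / (2 * ε)) = (4 * C + 1) / ε := by
    field_simp
  have ha' : (4 * C + 1) / ε ≤ 2 * a - 2 * C := by
    nlinarith [hdouble]
  set v := f (t + a) - f (t - a) with hv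
  set w := g (t + a) - g (t - a) with hwdef
  have hv_eq : v = (2 * a) • e + w := by
    simp only [hv, hwdef, hg]
    module
  have hw : ‖w‖ ≤ 2 * C := by
    calc ‖w‖ ≤ ‖g (t + a)‖ + ‖g (t - a)‖ := norm_sub_le _ _
    _ ≤ 2 * C := by linarith [hC (t + a), hC (t - a)]
  have ha_pos : 0 < a := by nlinarith [hden]
  have h2ae : ‖(2 * a) • e‖ = 2 * a := by
    rw [norm_smul, he, Real.norm_eq_abs, abs_of_pos (by linarith)]; ring
  have hnv_lb : 2 * a - 2 * C ≤ ‖v‖ := by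
    have h1 : (2 * a) • e = v - w := by rw [hv_eq]; abel
    have h2 : ‖v - w‖ ≤ ‖v‖ + ‖w‖ := norm_sub_le _ _
    rw [← h1, h2ae] at h2
    linarith
  have hnv_pos : 0 < ‖v‖ := lt_of_lt_of_le hden (le_trans ha' hnv_lb)
  have habs : |2 * a - ‖v‖| ≤ ‖w‖ := by
    have := abs_norm_sub_norm_le ((2 * a) • e) v
    rw [h2ae] at this
    refine this.trans ?_
    rw [hv_eq]
    simp [norm_neg]
  have hkey : ‖v - ‖v‖ • e‖ ≤ 4 * C := by
    calc ‖v - ‖v‖ • e‖ = ‖w + (2 * a - ‖v‖) • e‖ := by rw [hv_eq]; congr 1; module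
    _ ≤ ‖w‖ + ‖(2 * a - ‖v‖) • e‖ := norm_add_le _ _
    _ = ‖w‖ + |2 * a - ‖v‖| := by rw [norm_smul, he, Real.norm_eq_abs, mul_one]
    _ ≤ 2 * C + 2 * C := by linarith [habs.trans hw]
    _ = 4 * C := by ring
  have hGe : ‖v‖⁻¹ • v - e = ‖v‖⁻¹ • (v - ‖v‖ • e) := by
    conv_rhs => rw [smul_sub, smul_smul, inv_mul_cancel₀ hnv_pos.ne', one_smul]
  have hdist : dist e (‖v‖⁻¹ • v) ≤ 4 * C / ‖v‖ := by
    rw [dist_eq_norm, ← norm_neg, neg_sub, hGe, norm_smul, norm_inv, norm_norm]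
    rw [div_eq_inv_mul]
    exact mul_le_mul_of_nonneg_left hkey (by positivity)
  have hfinal : 4 * C / ‖v‖ < ε := by
    have hle : 4 * C / ‖v‖ ≤ 4 * C / ((4 * C + 1) / ε) :=
      div_le_div_of_nonneg_left (by linarith) hden (le_trans ha' hnv_lb)
    have : 4 * C / ((4 * C + 1) / ε) < ε := by
      rw [div_div_eq_mul_div, div_lt_iff₀ (by linarith)]
      nlinarith
    linarith
  exact lt_of_le_of_lt hdist hfinal
end

section
/- For natural numbers k and n, let Sh(k,n) denote the set of (k,n)-shuffles, i.e. permutations σ of {0,1,…,k+n−1} satisfying σ(0) < σ(1) < … < σ(k−1) and σ(k) < σ(k+1) < … < σ(k+n−1). Then the sum of the signs of all (k,n)-shuffles, Σ_{σ ∈ Sh(k,n)} sign(σ) (equivalently, the number of even shuffles minus the number of odd shuffles), equals 0 if k and n are both odd, and equals the binomial coefficient C(⌊(k+n)/2⌋, ⌊k/2⌋) otherwise. -/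
/-!
A `(k,n)`-shuffle `σ` is determined by the set `A` of its values on the first `k` positions:
it is the permutation sorting `Fin (k+n)` so that `A` comes first and each block stays increasing.
Its inversions are exactly the pairs `b < a` with `a ∈ A`, `b ∉ A`, so the signed count is
`∑_{#A = k} (-1)^{inv(A)}`, the Gaussian binomial `[k+n choose k]_q` at `q = -1`. Splitting off
the largest element of the ground set gives the `q`-Pascal rule
`S(m+1, k+1) = S(m, k+1) + (-1)^(m-k) S(m, k)`, and the closed form satisfies the same rule.
-/

open Finset Equiv

/-- The Gaussian binomial coefficient `[k+n choose k]_q` evaluated at `q = -1`. -/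
def qBinomialAtNegOne (k n : ℕ) : ℤ :=
  if Odd k ∧ Odd n then 0 else ((k + n) / 2).choose (k / 2)

lemma qBinomialAtNegOne_zero_left (n : ℕ) : qBinomialAtNegOne 0 n = 1 := by
  simp [qBinomialAtNegOne]

lemma qBinomialAtNegOne_zero_right (k : ℕ) : qBinomialAtNegOne k 0 = 1 := by
  simp [qBinomialAtNegOne]

lemma qBinomialAtNegOne_even_even (a b : ℕ) :
    qBinomialAtNegOne (2 * a) (2 * b) = (a + b).choose a := by
  simp [qBinomialAtNegOne, ← mul_add]

lemma qBinomialAtNegOne_even_odd (a b : ℕ) :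
    qBinomialAtNegOne (2 * a) (2 * b + 1) = (a + b).choose a := by
  simp [qBinomialAtNegOne, show (2 * a + (2 * b + 1)) / 2 = a + b by omega]

lemma qBinomialAtNegOne_odd_even (a b : ℕ) :
    qBinomialAtNegOne (2 * a + 1) (2 * b) = (a + b).choose a := by
  simp [qBinomialAtNegOne, show (2 * a + 1 + 2 * b) / 2 = a + b by omega,
    show (2 * a + 1) / 2 = a by omega]

lemma qBinomialAtNegOne_odd_odd (a b : ℕ) : qBinomialAtNegOne (2 * a + 1) (2 * b + 1) = 0 := by
  simp [qBinomialAtNegOne]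

lemma qBinomialAtNegOne_succ_succ (k n : ℕ) :
    qBinomialAtNegOne (k + 1) (n + 1) =
      qBinomialAtNegOne (k + 1) n + (-1) ^ (n + 1) * qBinomialAtNegOne k (n + 1) := by
  obtain ⟨a, rfl | rfl⟩ := Nat.even_or_odd' k <;> obtain ⟨b, rfl | rfl⟩ := Nat.even_or_odd' n <;>
    simp only [add_assoc, ← mul_add_one 2, qBinomialAtNegOne_even_even,
      qBinomialAtNegOne_even_odd, qBinomialAtNegOne_odd_even, qBinomialAtNegOne_odd_odd]
  · simp [pow_succ, pow_mul]
  · simp [pow_mul]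
  · simp
  · rw [pow_mul, neg_one_sq, one_pow, one_mul,
      show a + (1 + (b + 1)) = a + b + 1 + 1 by omega, Nat.choose_succ_succ']
    push_cast
    ring_nf

section SignedSubsetSum

variable {α : Type*} [LinearOrder α]

def crossInversions (A B : Finset α) : ℕ := ∑ a ∈ A, #{b ∈ B | b < a}

lemma crossInversions_insert_left {a : α} {A : Finset α} (B : Finset α) (ha : a ∉ A) :
    crossInversions (insert a A) B = #{b ∈ B | b < a} + crossInversions A B :=
  sum_insert ha

lemma crossInversions_insert_right {a : α} {A : Finset α} (B : Finset α) (h : ∀ x ∈ A, x ≤ a) :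
    crossInversions A (insert a B) = crossInversions A B :=
  sum_congr rfl fun x hx => by rw [filter_insert, if_neg (h x hx).not_gt]

def signedSubsetSum (s : Finset α) (k : ℕ) : ℤ :=
  ∑ A ∈ s.powersetCard k, (-1) ^ crossInversions A (s \ A)

lemma signedSubsetSum_zero (s : Finset α) : signedSubsetSum s 0 = 1 := by
  simp [signedSubsetSum, crossInversions]

lemma signedSubsetSum_of_card_lt {s : Finset α} {k : ℕ} (h : #s < k) :
    signedSubsetSum s k = 0 := by
  rw [signedSubsetSum, powersetCard_eq_empty.2 h, sum_empty]

lemma signedSubsetSum_insert_of_forall_lt {a : α} {s : Finset α} (h : ∀ x ∈ s, x < a) (k : ℕ) :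
    signedSubsetSum (insert a s) (k + 1) =
      signedSubsetSum s (k + 1) + (-1) ^ (#s - k) * signedSubsetSum s k := by
  have ha : a ∉ s := fun ha => (h a ha).false
  rw [signedSubsetSum, powersetCard_succ_insert ha, sum_union, sum_image]
  · congr 1
    · refine sum_congr rfl fun A hA => ?_
      rw [mem_powersetCard] at hA
      rw [insert_sdiff_of_notMem _ (fun haA => ha (hA.1 haA)),
        crossInversions_insert_right _ fun x hx => (h x (hA.1 hx)).le]
    · rw [signedSubsetSum, mul_sum]
      refine sum_congr rfl fun A hA => ?_
      rw [mem_powersetCard] at hA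
      have haA : a ∉ A := fun haA => ha (hA.1 haA)
      rw [insert_sdiff_insert, sdiff_insert_of_notMem ha, crossInversions_insert_left _ haA,
        filter_true_of_mem fun x hx => h x (mem_sdiff.1 hx).1, card_sdiff_of_subset hA.1, hA.2,
        pow_add]
  · intro A hA B hB hAB
    have hA' := (mem_powersetCard.1 (mem_coe.1 hA)).1
    have hB' := (mem_powersetCard.1 (mem_coe.1 hB)).1
    rw [← erase_insert (fun haA => ha (hA' haA)), ← erase_insert (fun haB => ha (hB' haB))]
    exact congrArg (·.erase a) hAB
  · refine disjoint_left.2 fun A hA hA' => ?_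
    obtain ⟨B, -, rfl⟩ := mem_image.1 hA'
    exact ha ((mem_powersetCard.1 hA).1 (mem_insert_self a B))

theorem signedSubsetSum_eq_qBinomialAtNegOne (s : Finset α) {k n : ℕ} (h : #s = k + n) :
    signedSubsetSum s k = qBinomialAtNegOne k n := by
  induction s using Finset.induction_on_max generalizing k n with
  | empty =>
    obtain ⟨rfl, rfl⟩ : k = 0 ∧ n = 0 := by simp at h; omega
    rw [signedSubsetSum_zero, qBinomialAtNegOne_zero_left]
  | insert a s hlt ih =>
    rw [card_insert_of_notMem fun ha => (hlt a ha).false] at h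
    cases k with
    | zero => rw [signedSubsetSum_zero, qBinomialAtNegOne_zero_left]
    | succ k =>
      rw [signedSubsetSum_insert_of_forall_lt hlt]
      cases n with
      | zero =>
        rw [signedSubsetSum_of_card_lt (by omega), ih (n := 0) (by omega), show #s - k = 0 by omega,
          qBinomialAtNegOne_zero_right, qBinomialAtNegOne_zero_right]
        norm_num
      | succ n =>
        rw [ih (n := n) (by omega), ih (n := n + 1) (by omega), show #s - k = n + 1 by omega,
          qBinomialAtNegOne_succ_succ]

end SignedSubsetSum

namespace Equiv.Perm

lemma sign_eq_signAux {n : ℕ} (f : Perm (Fin n)) : sign f = signAux f := by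
  induction f using swap_induction_on with
  | one => simp
  | swap_mul f x y hxy ih => rw [sign_mul, signAux_mul, sign_swap hxy, signAux_swap hxy, ih]

lemma sign_eq_neg_one_pow_card {n : ℕ} (f : Perm (Fin n)) :
    (sign f : ℤ) = (-1) ^ #{x ∈ finPairsLT n | f x.1 ≤ f x.2} := by
  rw [sign_eq_signAux, signAux, prod_ite, prod_const_one, mul_one, prod_const]
  push_cast
  rfl

end Equiv.Perm

section Shuffle

variable {m : ℕ}

def IsShuffle (k : ℕ) (σ : Perm (Fin m)) : Prop :=
  (∀ i j : Fin m, i < j → (j : ℕ) < k → σ i < σ j) ∧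
    (∀ i j : Fin m, i < j → k ≤ (i : ℕ) → σ i < σ j)

instance (k : ℕ) : DecidablePred (IsShuffle (m := m) k) :=
  fun _ => inferInstanceAs (Decidable (_ ∧ _))

def shuffleBlock (k : ℕ) (σ : Perm (Fin m)) : Finset (Fin m) := {x | (σ.symm x : ℕ) < k}

@[simp]
lemma apply_mem_shuffleBlock_iff {k : ℕ} {σ : Perm (Fin m)} {i : Fin m} :
    σ i ∈ shuffleBlock k σ ↔ (i : ℕ) < k := by
  simp [shuffleBlock]

lemma card_shuffleBlock {k : ℕ} (σ : Perm (Fin m)) (hk : k ≤ m) : #(shuffleBlock k σ) = k := by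
  rw [shuffleBlock, card_equiv σ.symm (t := {i : Fin m | i < k}) (by simp), Fin.card_filter_val_lt,
    min_eq_right hk]

def shuffleKey (A : Finset (Fin m)) (x : Fin m) : ℕ := if x ∈ A then x else m + x

def shuffleOf (A : Finset (Fin m)) : Perm (Fin m) := Tuple.sort (shuffleKey A)

lemma shuffleKey_lt_iff (A : Finset (Fin m)) (x : Fin m) : shuffleKey A x < m ↔ x ∈ A := by
  unfold shuffleKey; split_ifs <;> simp [*]

lemma shuffleKey_injective (A : Finset (Fin m)) : Function.Injective (shuffleKey A) := by
  intro x y hxy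
  unfold shuffleKey at hxy
  split_ifs at hxy <;> omega

lemma shuffleKey_lt_shuffleKey_iff {A : Finset (Fin m)} {x y : Fin m} (h : x ∈ A ↔ y ∈ A) :
    shuffleKey A x < shuffleKey A y ↔ x < y := by
  rw [Fin.lt_def]
  unfold shuffleKey
  split_ifs <;> simp_all

lemma strictMono_shuffleKey_comp_shuffleOf (A : Finset (Fin m)) :
    StrictMono (shuffleKey A ∘ shuffleOf A) :=
  (Tuple.monotone_sort _).strictMono_of_injective
    ((shuffleKey_injective A).comp (Equiv.injective _))

lemma eq_shuffleOf_of_strictMono {A : Finset (Fin m)} {σ : Perm (Fin m)}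
    (h : StrictMono (shuffleKey A ∘ σ)) : σ = shuffleOf A :=
  Tuple.eq_sort_iff.2 ⟨h.monotone, fun _ _ hij hji => absurd (h hij) hji.not_lt⟩

lemma shuffleOf_shuffleBlock {k : ℕ} {σ : Perm (Fin m)} (hσ : IsShuffle k σ) :
    shuffleOf (shuffleBlock k σ) = σ := by
  refine (eq_shuffleOf_of_strictMono fun i j hij => ?_).symm
  have hij' : (i : ℕ) < j := hij
  simp only [Function.comp_apply, shuffleKey, apply_mem_shuffleBlock_iff]
  split_ifs with hik hjk hjk
  · exact hσ.1 i j hij hjk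
  · omega
  · omega
  · exact Nat.add_lt_add_left (hσ.2 i j hij (by omega)) m

lemma shuffleOf_apply_mem_iff {A : Finset (Fin m)} {k : ℕ} (hA : #A = k) (i : Fin m) :
    shuffleOf A i ∈ A ↔ (i : ℕ) < k := by
  have hcard : #{j | shuffleOf A j ∈ A} = k := by
    rw [← hA]
    exact card_equiv (shuffleOf A) (by simp)
  rw [← hcard, Fin.lt_card_filter_univ_iff_apply_of_imp]
  intro i j hji hi
  rw [← shuffleKey_lt_iff] at hi ⊢
  exact lt_of_le_of_lt ((strictMono_shuffleKey_comp_shuffleOf A).monotone hji) hi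

lemma isShuffle_shuffleOf {A : Finset (Fin m)} {k : ℕ} (hA : #A = k) :
    IsShuffle k (shuffleOf A) := by
  have hmono := strictMono_shuffleKey_comp_shuffleOf A
  refine ⟨fun i j hij hj => ?_, fun i j hij hi => ?_⟩ <;>
    refine (shuffleKey_lt_shuffleKey_iff ?_).1 (hmono hij) <;>
    simp only [shuffleOf_apply_mem_iff hA] <;> omega

lemma shuffleBlock_shuffleOf {A : Finset (Fin m)} {k : ℕ} (hA : #A = k) :
    shuffleBlock k (shuffleOf A) = A := by
  ext x
  rw [← (shuffleOf A).apply_symm_apply x, apply_mem_shuffleBlock_iff, shuffleOf_apply_mem_iff hA]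

lemma sign_shuffleOf (A : Finset (Fin m)) :
    (Perm.sign (shuffleOf A) : ℤ) = (-1) ^ crossInversions A Aᶜ := by
  rw [← Perm.sign_inv, Perm.sign_eq_neg_one_pow_card, crossInversions, ← card_sigma]
  congr 2
  ext ⟨x, y⟩
  have hle : (shuffleOf A)⁻¹ x ≤ (shuffleOf A)⁻¹ y ↔ shuffleKey A x ≤ shuffleKey A y := by
    simpa using ((strictMono_shuffleKey_comp_shuffleOf A).le_iff_le (a := (shuffleOf A)⁻¹ x)
      (b := (shuffleOf A)⁻¹ y)).symm
  simp only [mem_filter, Perm.mem_finPairsLT, mem_sigma, mem_compl, hle, shuffleKey, Fin.lt_def]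
  split_ifs <;> simp_all <;> omega

theorem sum_sign_isShuffle {k : ℕ} (hk : k ≤ m) :
    ∑ σ : Perm (Fin m) with IsShuffle k σ, (Perm.sign σ : ℤ) =
      signedSubsetSum (univ : Finset (Fin m)) k := by
  refine sum_nbij' (shuffleBlock k) shuffleOf (fun σ _ => ?_) (fun A hA => ?_) (fun σ hσ => ?_)
    (fun A hA => ?_) (fun σ hσ => ?_)
  · simpa using card_shuffleBlock σ hk
  · simpa using isShuffle_shuffleOf (mem_powersetCard_univ.1 hA)
  · exact shuffleOf_shuffleBlock (mem_filter.1 hσ).2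
  · exact shuffleBlock_shuffleOf (mem_powersetCard_univ.1 hA)
  · rw [← compl_eq_univ_sdiff, ← sign_shuffleOf, shuffleOf_shuffleBlock (mem_filter.1 hσ).2]

end Shuffle

/-- The sum of the signs of all `(k,n)`-shuffles (permutations `σ` of
`{0,…,k+n-1}` increasing on the first `k` and on the last `n` indices) equals `0` if `k`
and `n` are both odd, and equals `C(⌊(k+n)/2⌋, ⌊k/2⌋)` otherwise.  (This is the value at
`q = -1` of the quantum binomial coefficient, the coefficient appearing in the horizontal
differential of the diagram complex for odd ambient dimension.) -/
theorem signed_shuffle_count (k n : ℕ) :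
    (∑ σ ∈ Finset.univ.filter (fun σ : Equiv.Perm (Fin (k + n)) =>
        (∀ i j : Fin (k + n), i < j → (j : ℕ) < k → σ i < σ j) ∧
        (∀ i j : Fin (k + n), i < j → k ≤ (i : ℕ) → σ i < σ j)),
      (Equiv.Perm.sign σ : ℤ)) =
    if Odd k ∧ Odd n then 0 else (Nat.choose ((k + n) / 2) (k / 2) : ℤ) := by
  change ∑ σ : Perm (Fin (k + n)) with IsShuffle k σ, (Perm.sign σ : ℤ) = qBinomialAtNegOne k n
  rw [sum_sign_isShuffle (Nat.le_add_right k n)]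
  exact signedSubsetSum_eq_qBinomialAtNegOne _ (card_fin _)
end

section
/- For every natural number n ≥ 2, the greatest common divisor of the interior binomial coefficients of the n-th row of Pascal's triangle, gcd{ C(n,a) : 1 ≤ a ≤ n−1 }, equals p if n = p^k for some prime p and some k ≥ 1, and equals 1 if n is not a prime power. -/
/-- For `n ≥ 2`, the gcd of the interior binomial coefficients
`C(n,a)`, `1 ≤ a ≤ n-1`, equals `p` if `n = p^k` is a prime power (`k ≥ 1`), and equals
`1` if `n` is not a prime power.  (Computational content of Theorem 9.1(ii) of the paper
for even ambient dimension.) -/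
theorem gcd_interior_binomials (n : ℕ) (hn : 2 ≤ n) :
    (∀ p k : ℕ, p.Prime → 1 ≤ k → n = p ^ k →
      (Finset.Icc 1 (n - 1)).gcd (fun a => n.choose a) = p) ∧
    ((¬ ∃ p k : ℕ, p.Prime ∧ 1 ≤ k ∧ n = p ^ k) →
      (Finset.Icc 1 (n - 1)).gcd (fun a => n.choose a) = 1) := by
  constructor
  · rintro p k hp hk rfl
    have hpow : IsPrimePow (p ^ k) := (isPrimePow_nat_iff _).2 ⟨p, k, hp, hk, rfl⟩
    rw [Choose.gcd_choose_eq_minFac_of_isPrimePow hpow, hp.pow_minFac (by omega)]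
  · intro hnot
    refine Choose.gcd_choose_eq_one_of_not_isPrimePow hn fun hpow => hnot ?_
    obtain ⟨p, k, hp, hk, rfl⟩ := (isPrimePow_nat_iff n).1 hpow
    exact ⟨p, k, hp, hk, rfl⟩
end

section
/- For natural numbers a ≤ n define C₋₁(n,a) = 0 if a and n−a are both odd, and C₋₁(n,a) = C(⌊n/2⌋, ⌊a/2⌋) otherwise. Then for every natural number n ≥ 3, the greatest common divisor gcd{ C₋₁(n,a) : 1 ≤ a ≤ n−1 } equals p if n = 2p^k for some prime p and some k ≥ 1, and equals 1 otherwise. -/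
/-!
In row `2m` the entries `C₋₁(2m, a)` with `a` odd vanish and `C₋₁(2m, 2b) = C(m, b)`, so the gcd
is that of the interior binomial coefficients of row `m`, which is `p` when `m = p ^ k` and `1`
when `m` is not a prime power (Kummer/Lucas). In an odd row, `C₋₁(n, 1) = C(⌊n/2⌋, 0) = 1`.
-/

/-- The value at `q = -1` of the Gaussian binomial coefficient `C(n,a)_q`:
`0` if `a` and `n - a` are both odd, and `C(⌊n/2⌋, ⌊a/2⌋)` otherwise. -/
def qBinomNegOne (n a : ℕ) : ℕ :=
  if Odd a ∧ Odd (n - a) then 0 else Nat.choose (n / 2) (a / 2)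

open Finset

theorem qBinomNegOne_two_mul_two_mul (m b : ℕ) :
    qBinomNegOne (2 * m) (2 * b) = m.choose b := by
  simp [qBinomNegOne]

theorem qBinomNegOne_two_mul_of_odd {m a : ℕ} (ha : Odd a) (hle : a ≤ 2 * m) :
    qBinomNegOne (2 * m) a = 0 :=
  if_pos ⟨ha, Nat.Even.sub_odd hle (even_two_mul m) ha⟩

theorem qBinomNegOne_one_of_odd {n : ℕ} (hn : Odd n) : qBinomNegOne n 1 = 1 := by
  have : ¬ Odd (n - 1) := Nat.not_odd_iff_even.mpr (Nat.Odd.sub_odd hn odd_one)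
  simp [qBinomNegOne, this]

theorem gcd_qBinomNegOne_two_mul (m : ℕ) :
    (Icc 1 (2 * m - 1)).gcd (qBinomNegOne (2 * m)) = (Icc 1 (m - 1)).gcd m.choose := by
  refine Nat.dvd_antisymm (dvd_gcd_iff.mpr fun b hb => ?_) (dvd_gcd_iff.mpr fun a ha => ?_)
  · rw [mem_Icc] at hb
    rw [← qBinomNegOne_two_mul_two_mul]
    exact gcd_dvd (mem_Icc.mpr (by omega))
  · rw [mem_Icc] at ha
    rcases Nat.even_or_odd' a with ⟨b, rfl | rfl⟩
    · rw [qBinomNegOne_two_mul_two_mul]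
      exact gcd_dvd (mem_Icc.mpr (by omega))
    · rw [qBinomNegOne_two_mul_of_odd (odd_two_mul_add_one b) (by omega)]
      exact dvd_zero _

theorem gcd_qBinomNegOne_of_odd {n : ℕ} (hn : Odd n) (h2 : 2 ≤ n) :
    (Icc 1 (n - 1)).gcd (qBinomNegOne n) = 1 :=
  Nat.eq_one_of_dvd_one <|
    (gcd_dvd (mem_Icc.mpr ⟨le_rfl, by omega⟩)).trans (qBinomNegOne_one_of_odd hn).dvd

/-- For `n ≥ 3`, the gcd of the interior `q = -1` Gaussian binomial
coefficients `C₋₁(n,a)`, `1 ≤ a ≤ n-1`, equals `p` if `n = 2p^k` for a prime `p` and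
`k ≥ 1`, and equals `1` otherwise.  (Computational content of Theorem 9.1(ii) of the
paper for odd ambient dimension.) -/
theorem gcd_interior_qBinomNegOne (n : ℕ) (hn : 3 ≤ n) :
    (∀ p k : ℕ, p.Prime → 1 ≤ k → n = 2 * p ^ k →
      (Finset.Icc 1 (n - 1)).gcd (fun a => qBinomNegOne n a) = p) ∧
    ((¬ ∃ p k : ℕ, p.Prime ∧ 1 ≤ k ∧ n = 2 * p ^ k) →
      (Finset.Icc 1 (n - 1)).gcd (fun a => qBinomNegOne n a) = 1) := by
  rcases Nat.even_or_odd' n with ⟨m, rfl | rfl⟩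
  · rw [gcd_qBinomNegOne_two_mul]
    refine ⟨fun p k hp hk hpk => ?_, fun hnot => ?_⟩
    · obtain rfl : m = p ^ k := by omega
      rw [Choose.gcd_choose_eq_minFac_of_isPrimePow (hp.isPrimePow.pow (by omega)),
        hp.pow_minFac (by omega)]
    · refine Choose.gcd_choose_eq_one_of_not_isPrimePow (by omega) fun hm => hnot ?_
      obtain ⟨p, k, hp, hk, rfl⟩ := (isPrimePow_nat_iff m).mp hm
      exact ⟨p, k, hp, hk, rfl⟩
  · have hgcd := gcd_qBinomNegOne_of_odd (odd_two_mul_add_one m) (by omega)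
    exact ⟨fun p k _ _ h => by omega, fun _ => hgcd⟩
end

section
/- For natural numbers a ≤ n define C₋₁(n,a) = 0 if a and n−a are both odd, and C₋₁(n,a) = C(⌊n/2⌋, ⌊a/2⌋) otherwise. Then for every natural number m ≥ 1, the alternating sum Σ_{j=0}^{m} (−1)^{j + j(j−1)/2} · C₋₁(m,j) equals 0. -/
lemma pair_sum (f : ℕ → ℤ) (n : ℕ) :
    ∑ j ∈ Finset.range (2 * n), f j = ∑ i ∈ Finset.range n, (f (2 * i) + f (2 * i + 1)) := by
  induction n with
  | zero => simp
  | succ k ih =>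
      rw [Finset.sum_range_succ, ← ih, show 2 * (k + 1) = (2 * k + 1) + 1 by ring,
        Finset.sum_range_succ, Finset.sum_range_succ]
      ring

lemma sign_even (i : ℕ) : (-1 : ℤ) ^ (2 * i + 2 * i * (2 * i - 1) / 2) = (-1) ^ i := by
  rcases i with _ | k
  · simp
  · have h1 : 2 * (k + 1) - 1 = 2 * k + 1 := by omega
    have h2 : 2 * (k + 1) * (2 * k + 1) / 2 = (k + 1) * (2 * k + 1) := by
      rw [show 2 * (k + 1) * (2 * k + 1) = 2 * ((k + 1) * (2 * k + 1)) by ring,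
        Nat.mul_div_cancel_left _ (by norm_num)]
    rw [h1, h2, show 2 * (k + 1) + (k + 1) * (2 * k + 1) = (k + 1) + 2 * (k * k + 2 * k + 1) by
      ring, pow_add, pow_mul]
    norm_num

lemma sign_odd (i : ℕ) :
    (-1 : ℤ) ^ ((2 * i + 1) + (2 * i + 1) * (2 * i + 1 - 1) / 2) = -(-1) ^ i := by
  have h1 : 2 * i + 1 - 1 = 2 * i := rfl
  have h2 : (2 * i + 1) * (2 * i) / 2 = (2 * i + 1) * i := by
    rw [show (2 * i + 1) * (2 * i) = 2 * ((2 * i + 1) * i) by ring,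
      Nat.mul_div_cancel_left _ (by norm_num)]
  rw [h1, h2, show (2 * i + 1) + (2 * i + 1) * i = (i + 1) + 2 * (i * i + i) by ring,
    pow_add, pow_mul]
  norm_num [pow_succ]

/-- For every `m ≥ 1`, the alternating sum
`Σ_{j=0}^{m} (-1)^{j + j(j-1)/2} C₋₁(m,j)` vanishes.  (The arithmetic content, for odd
ambient dimension, of Proposition 8.1 of the paper: the formula for `I⁻¹` is inverse to
the isomorphism `I` of Theorem 5.3.) -/
theorem alternating_sum_qBinomNegOne (m : ℕ) (hm : 1 ≤ m) :
    ∑ j ∈ Finset.range (m + 1),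
      (-1 : ℤ) ^ (j + j * (j - 1) / 2) * (qBinomNegOne m j : ℤ) = 0 := by
  rcases Nat.even_or_odd m with ⟨M, hM⟩ | ⟨M, hM⟩
  · -- m = 2M, M ≥ 1
    subst hM
    have hM1 : 1 ≤ M := by omega
    rw [show M + M = 2 * M by ring] at *
    rw [Finset.sum_range_succ, pair_sum]
    have hlast : qBinomNegOne (2 * M) (2 * M) = Nat.choose M M := by
      unfold qBinomNegOne
      rw [if_neg (by simp [Nat.even_mul, parity_simps])]
      simp [Nat.mul_div_cancel_left]
    have hpairs : ∀ i ∈ Finset.range M,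
        ((-1 : ℤ) ^ (2 * i + 2 * i * (2 * i - 1) / 2) * (qBinomNegOne (2 * M) (2 * i) : ℤ) +
         (-1 : ℤ) ^ ((2 * i + 1) + (2 * i + 1) * (2 * i + 1 - 1) / 2) *
           (qBinomNegOne (2 * M) (2 * i + 1) : ℤ))
        = (-1) ^ i * (Nat.choose M i : ℤ) := by
      intro i hi
      rw [Finset.mem_range] at hi
      have he : qBinomNegOne (2 * M) (2 * i) = Nat.choose M i := by
        unfold qBinomNegOne
        rw [if_neg (by simp [Nat.even_mul, parity_simps])]
        simp [Nat.mul_div_cancel_left]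
      have ho : qBinomNegOne (2 * M) (2 * i + 1) = 0 := by
        unfold qBinomNegOne
        rw [if_pos ⟨⟨i, by ring⟩, ⟨M - i - 1, by omega⟩⟩]
      rw [he, ho, sign_even]
      push_cast
      ring
    rw [Finset.sum_congr rfl hpairs, hlast, sign_even]
    have := Int.alternating_sum_range_choose_of_ne (n := M) (by omega)
    rw [Finset.sum_range_succ] at this
    simpa using this
  · -- m = 2M + 1
    subst hM
    rw [show 2 * M + 1 + 1 = 2 * (M + 1) by ring, pair_sum]
    apply Finset.sum_eq_zero
    intro i hi
    rw [Finset.mem_range] at hi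
    have he : qBinomNegOne (2 * M + 1) (2 * i) = Nat.choose M i := by
      unfold qBinomNegOne
      rw [if_neg (by simp [Nat.even_mul, parity_simps])]
      congr 1 <;> omega
    have ho : qBinomNegOne (2 * M + 1) (2 * i + 1) = Nat.choose M i := by
      unfold qBinomNegOne
      rw [if_neg]
      · congr 1 <;> omega
      · rintro ⟨-, h2⟩
        have : 2 * M + 1 - (2 * i + 1) = 2 * (M - i) := by omega
        rw [this, Nat.odd_iff] at h2
        omega
    rw [he, ho, sign_even, sign_odd]
    ring
end
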